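/- Let A*_s be the kernels defined above in dimension d ≥ 1 and n ∈ ℕ. Then ‖ Σ_{s ∈ ℤ₊^d, s_1+⋯+s_d = n+1} A*_s ‖_{L∞(ℝ^d)} ≍ 2^n n^{d-1}, with implicit constants depending only on d. -/

import Mathlib

open MeasureTheory Real Filter Set
open scoped ENNReal NNReal BigOperators

noncomputable section

/-- The triangle/trapezoidal Fourier multipliers `k_m`. -/
def kmul : ℕ → ℝ → ℝ
  | 0, l => max (1 - |l|) 0
  | (m + 1), l =>
      if |l| < 2 ^ m then 1
      else if |l| ≤ 2 ^ (m + 1) then 2 * (1 - |l| / 2 ^ (m + 1))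
      else 0

/-- `K_m(t) = ∫_ℝ k_m(λ) e^{-2πiλt} dλ`. -/
def Kker (m : ℕ) (t : ℝ) : ℂ :=
  ∫ l : ℝ, (kmul m l : ℂ) * Complex.exp (-(2 * Real.pi * l * t) * Complex.I)

/-- `K_m - K_{m-1}` with `K_{-1} ≡ 0`. -/
def KD (m : ℕ) (t : ℝ) : ℂ :=
  Kker m t - (if m = 0 then 0 else Kker (m - 1) t)

/-- The kernels `A*_s(x) = ∏_j (K_{s_j}(x_j) - K_{s_j-1}(x_j))`. -/
def Astar {d : ℕ} (s : Fin d → ℕ) (x : EuclideanSpace ℝ (Fin d)) : ℂ :=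
  ∏ j, KD (s j) (x j)

/-- Convolution `A*_s ∗ f`. -/
def AstarConv {d : ℕ} (s : Fin d → ℕ) (f : EuclideanSpace ℝ (Fin d) → ℂ)
    (x : EuclideanSpace ℝ (Fin d)) : ℂ :=
  ∫ y, f y * Astar s (x - y)

/-- Decomposition norm of the Nikolskii–Besov space `S^r_{p,θ}B(ℝ^d)` (scalar `r`). -/
def besovNorm {d : ℕ} (p θ : ℝ≥0∞) (r : ℝ) (f : EuclideanSpace ℝ (Fin d) → ℂ) : ℝ≥0∞ :=
  eLpNorm (fun s : Fin d → ℕ =>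
    (2 : ℝ) ^ ((∑ j, (s j : ℝ)) * r) * (eLpNorm (AstarConv s f) p volume).toReal)
    θ Measure.count

/-- The unit ball (class) `S^r_{p,θ}B(ℝ^d)`. -/
def besovClass (d : ℕ) (p θ : ℝ≥0∞) (r : ℝ) : Set (EuclideanSpace ℝ (Fin d) → ℂ) :=
  {f | MemLp f p volume ∧ besovNorm p θ r f ≤ 1}

/-- Dyadic blocks `Q*_{2^s}`. -/
def Qstar {d : ℕ} (s : Fin d → ℕ) : Set (EuclideanSpace ℝ (Fin d)) :=
  {l | ∀ j, (if s j = 0 then (0 : ℝ) else 2 ^ (s j - 1)) ≤ |l j| ∧ |l j| < 2 ^ (s j)}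

/-- `δ*_s(f) = ℱ^{-1}(χ_{Q*_{2^s}} · ℱ f)`. -/
def deltaS {d : ℕ} (s : Fin d → ℕ) (f : EuclideanSpace ℝ (Fin d) → ℂ) :
    EuclideanSpace ℝ (Fin d) → ℂ :=
  FourierTransformInv.fourierInv (Set.indicator (Qstar s) (FourierTransform.fourier f))

/-- `e_M^ℱ(S^r_{p,θ}B)_q` : best approximation by entire functions with spectrum in a
union of dyadic blocks of total measure at most `M`. -/
def eMF (d : ℕ) (p θ : ℝ≥0∞) (r : ℝ) (q : ℝ≥0∞) (M : ℝ) : ℝ≥0∞ :=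
  ⨆ f ∈ besovClass d p θ r,
    ⨅ (L : Finset (Fin d → ℕ))
      (_ : volume (⋃ s ∈ L, Qstar s) ≤ ENNReal.ofReal M),
      eLpNorm (fun x => f x - ∑ s ∈ L, deltaS s f x) q volume

/-- The distributional Fourier transform of `g` is supported in `S`. -/
def HasFourierSupportIn {d : ℕ} (g : EuclideanSpace ℝ (Fin d) → ℂ)
    (S : Set (EuclideanSpace ℝ (Fin d))) : Prop :=
  ∀ φ : SchwartzMap (EuclideanSpace ℝ (Fin d)) ℂ,
    Disjoint (tsupport ⇑φ) S →
      ∫ x, g x * SchwartzMap.fourierTransformCLM ℂ φ x = 0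


/-- One-dimensional block convolution `A*_s ∗ f`. -/
def AstarConv1 (s : ℕ) (f : ℝ → ℂ) (x : ℝ) : ℂ :=
  ∫ y, f y * KD s (x - y)

/-- One-dimensional Nikolskii–Besov decomposition norm of `S^r_{p,θ}B(ℝ)`. -/
def besovNorm1 (p θ : ℝ≥0∞) (r : ℝ) (f : ℝ → ℂ) : ℝ≥0∞ :=
  eLpNorm (fun s : ℕ => (2 : ℝ) ^ ((s : ℝ) * r) * (eLpNorm (AstarConv1 s f) p volume).toReal)
    θ Measure.count

end

/-! `K_m - K_{m-1}` is the Fourier transform of `k_m - k_{m-1}`, a nonnegative function bounded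
by `1`, supported in `[-2^m, 2^m]` and at least `1/4` on `[2^(m-1), 3·2^(m-2)]`. Hence `A*_s`
attains its sup norm at the origin, where it equals `∏_j ∫ (k_{s_j} - k_{s_j-1}) ≍ 2^(Σ s_j)`,
and all the kernels in the sum are positive there. So the `L∞` norm of the sum is its value at
`0`, which is `≍ 2^n` times the number `(n+d choose d-1) ≍ n^(d-1)` of compositions of `n+1`
into `d` parts. -/

section Multiplier

variable (m : ℕ) {l : ℝ}

lemma kmul_nonneg : 0 ≤ kmul m l := by
  cases m with
  | zero => exact le_max_right _ _
  | succ m =>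
    simp only [kmul]
    split_ifs with _ h₂
    · exact zero_le_one
    · have : |l| / 2 ^ (m + 1) ≤ 1 := div_le_one_of_le₀ h₂ (by positivity)
      linarith
    · exact le_rfl

lemma kmul_le_one : kmul m l ≤ 1 := by
  cases m with
  | zero => exact max_le (by linarith [abs_nonneg l]) zero_le_one
  | succ m =>
    simp only [kmul]
    split_ifs with h₁ h₂
    · exact le_rfl
    · have : (1 : ℝ) / 2 ≤ |l| / 2 ^ (m + 1) := by
        rw [le_div_iff₀ (by positivity), pow_succ]; linarith
      linarith
    · exact zero_le_one

lemma kmul_eq_zero_of_le_abs (h : 2 ^ m ≤ |l|) : kmul m l = 0 := by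
  cases m with
  | zero => simp only [kmul, pow_zero] at h ⊢; exact max_eq_right (by linarith)
  | succ m =>
    have h' : (2 : ℝ) ^ m < |l| := (pow_lt_pow_right₀ one_lt_two m.lt_succ_self).trans_le h
    simp only [kmul, if_neg h'.not_gt]
    split_ifs with h₂
    · rw [le_antisymm h₂ h, div_self (by positivity)]; ring
    · rfl

lemma kmul_succ_eq_one_of_abs_le (h : |l| ≤ 2 ^ m) : kmul (m + 1) l = 1 := by
  simp only [kmul]
  split_ifs with h₁ h₂
  · rfl
  · rw [le_antisymm h (not_lt.1 h₁), pow_succ, div_mul_cancel_left₀ (by positivity)]; norm_num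
  · exact absurd (h.trans (pow_le_pow_right₀ one_le_two m.le_succ)) h₂

lemma kmul_le_kmul_succ : kmul m l ≤ kmul (m + 1) l := by
  rcases le_or_gt (|l|) (2 ^ m) with h | h
  · rw [kmul_succ_eq_one_of_abs_le m h]; exact kmul_le_one m
  · rw [kmul_eq_zero_of_le_abs m h.le]; exact kmul_nonneg (m + 1)

lemma half_le_kmul_succ (h : |l| ≤ 3 / 2 * 2 ^ m) : 1 / 2 ≤ kmul (m + 1) l := by
  have hpos : (0 : ℝ) < 2 ^ (m + 1) := by positivity
  have hfrac : |l| / 2 ^ (m + 1) ≤ 3 / 4 := by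
    rw [div_le_iff₀ hpos, pow_succ]; linarith
  simp only [kmul]
  split_ifs with _ h₂
  · norm_num
  · linarith
  · exact absurd (h.trans (by rw [pow_succ]; linarith [pow_pos (two_pos (α := ℝ)) m])) h₂

lemma quarter_le_kmul_zero (h : |l| ≤ 3 / 4) : 1 / 4 ≤ kmul 0 l :=
  le_max_of_le_left (by linarith)

lemma kmul_le_indicator : kmul m l ≤ (Icc (-2 ^ m) (2 ^ m)).indicator 1 l := by
  by_cases h : l ∈ Icc (-2 ^ m : ℝ) (2 ^ m)
  · rw [indicator_of_mem h]; exact kmul_le_one m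
  · rw [indicator_of_notMem h, kmul_eq_zero_of_le_abs m]
    rw [mem_Icc, not_and_or, not_le, not_le] at h
    rcases h with h | h
    · rw [abs_of_neg (by linarith [pow_pos (two_pos (α := ℝ)) m])]; linarith
    · exact h.le.trans (le_abs_self l)

lemma measurable_kmul : Measurable (kmul m) := by
  cases m with
  | zero => exact ((continuous_const.sub continuous_abs).max continuous_const).measurable
  | succ m =>
    refine Measurable.ite (measurableSet_lt measurable_abs measurable_const) measurable_const ?_
    refine Measurable.ite (measurableSet_le measurable_abs measurable_const) ?_ measurable_const
    exact measurable_const.mul (measurable_const.sub (measurable_abs.div_const _))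

end Multiplier

noncomputable def kdiff : ℕ → ℝ → ℝ
  | 0 => kmul 0
  | m + 1 => kmul (m + 1) - kmul m

section Difference

variable (m : ℕ) {l : ℝ}

lemma kdiff_nonneg : 0 ≤ kdiff m l := by
  cases m with
  | zero => exact kmul_nonneg 0
  | succ m => exact sub_nonneg.2 (kmul_le_kmul_succ m)

lemma kdiff_le_kmul : kdiff m l ≤ kmul m l := by
  cases m with
  | zero => exact le_rfl
  | succ m => exact sub_le_self _ (kmul_nonneg m)

lemma indicator_le_kdiff :
    (Icc (2 ^ m / 2) (3 / 4 * 2 ^ m)).indicator (fun _ => 1 / 4) l ≤ kdiff m l := by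
  by_cases h : l ∈ Icc (2 ^ m / 2 : ℝ) (3 / 4 * 2 ^ m)
  · rw [indicator_of_mem h]
    have hl : |l| = l := abs_of_nonneg (le_trans (by positivity) h.1)
    cases m with
    | zero => exact quarter_le_kmul_zero (by norm_num [hl] at h ⊢; exact h.2)
    | succ m =>
      rw [pow_succ] at h
      have hkm : kmul m l = 0 := kmul_eq_zero_of_le_abs m (by rw [hl]; linarith [h.1])
      have := half_le_kmul_succ m (l := l) (by rw [hl]; linarith [h.2])
      simp only [kdiff, Pi.sub_apply, hkm]
      linarith
  · rw [indicator_of_notMem h]; exact kdiff_nonneg m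

lemma measurable_kdiff : Measurable (kdiff m) := by
  cases m with
  | zero => exact measurable_kmul 0
  | succ m => exact (measurable_kmul (m + 1)).sub (measurable_kmul m)

end Difference

lemma integral_indicator_Icc_const {a b : ℝ} (hab : a ≤ b) (c : ℝ) :
    ∫ x, (Icc a b).indicator (fun _ => c) x = (b - a) * c := by
  rw [integral_indicator_const c measurableSet_Icc, Real.volume_real_Icc_of_le hab, smul_eq_mul]

lemma integrable_indicator_Icc_const (a b c : ℝ) :
    Integrable ((Icc a b).indicator fun _ => c) :=
  (integrable_indicator_iff measurableSet_Icc).2 (integrableOn_const measure_Icc_lt_top.ne)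

lemma integrable_of_le_indicator_Icc {f : ℝ → ℝ} {a b c : ℝ} (hf : Measurable f)
    (h₀ : ∀ x, 0 ≤ f x) (h : ∀ x, f x ≤ (Icc a b).indicator (fun _ => c) x) : Integrable f :=
  (integrable_indicator_Icc_const a b c).mono' hf.aestronglyMeasurable
    (ae_of_all _ fun x => (abs_of_nonneg (h₀ x)).trans_le (h x))

lemma integrable_kmul (m : ℕ) : Integrable (kmul m) :=
  integrable_of_le_indicator_Icc (measurable_kmul m) (fun _ => kmul_nonneg m)
    (fun _ => kmul_le_indicator m)

lemma integrable_kdiff (m : ℕ) : Integrable (kdiff m) :=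
  integrable_of_le_indicator_Icc (measurable_kdiff m) (fun _ => kdiff_nonneg m)
    (fun _ => (kdiff_le_kmul m).trans (kmul_le_indicator m))

lemma integral_kdiff_le (m : ℕ) : ∫ l, kdiff m l ≤ 2 ^ (m + 1) := by
  have hle := integral_mono (integrable_kdiff m) (integrable_indicator_Icc_const _ _ 1)
    fun _ => (kdiff_le_kmul m).trans (kmul_le_indicator m)
  rw [integral_indicator_Icc_const (by linarith [pow_pos (two_pos (α := ℝ)) m])] at hle
  linarith [pow_succ (2 : ℝ) m]

lemma le_integral_kdiff (m : ℕ) : 2 ^ m / 16 ≤ ∫ l, kdiff m l := by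
  have hle := integral_mono (integrable_indicator_Icc_const _ _ _) (integrable_kdiff m)
    fun _ => indicator_le_kdiff m
  rw [integral_indicator_Icc_const (by linarith [pow_pos (two_pos (α := ℝ)) m])] at hle
  linarith

section Fourier

open FourierTransform

lemma Kker_eq_fourier (m : ℕ) : Kker m = 𝓕 fun l => (kmul m l : ℂ) := by
  ext t
  rw [Real.fourier_real_eq_integral_exp_smul, Kker]
  congr 1 with l
  rw [smul_eq_mul, mul_comm]
  push_cast
  ring_nf

lemma fourier_ofReal_sub {f g : ℝ → ℝ} (hf : Integrable f) (hg : Integrable g) :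
    (𝓕 fun l => (f l : ℂ) - g l) = (𝓕 fun l => (f l : ℂ)) - 𝓕 fun l => (g l : ℂ) := by
  ext w
  simp only [Real.fourier_eq, Pi.sub_apply, smul_sub]
  exact integral_sub ((Real.fourierIntegral_convergent_iff w).2 hf.ofReal)
    ((Real.fourierIntegral_convergent_iff w).2 hg.ofReal)

lemma KD_eq_fourier (m : ℕ) : KD m = 𝓕 fun l => (kdiff m l : ℂ) := by
  ext t
  cases m with
  | zero => simp [KD, Kker_eq_fourier, kdiff]
  | succ m =>
    simp [KD, kdiff, Kker_eq_fourier,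
      fourier_ofReal_sub (integrable_kmul (m + 1)) (integrable_kmul m)]

lemma fourier_ofReal_zero (f : ℝ → ℝ) : 𝓕 (fun l => (f l : ℂ)) 0 = ((∫ l, f l : ℝ) : ℂ) := by
  rw [Real.fourier_eq, ← integral_complex_ofReal]
  simp

lemma norm_fourier_ofReal_le (f : ℝ → ℝ) (w : ℝ) :
    ‖𝓕 (fun l => (f l : ℂ)) w‖ ≤ ∫ l, |f l| := by
  refine (VectorFourier.norm_fourierIntegral_le_integral_norm 𝐞 volume (innerₗ ℝ)
    (fun l => (f l : ℂ)) w).trans_eq ?_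
  simp

lemma continuous_fourier_ofReal {f : ℝ → ℝ} (hf : Integrable f) :
    Continuous (𝓕 fun l => (f l : ℂ)) :=
  VectorFourier.fourierIntegral_continuous Real.continuous_fourierChar
    (innerSL ℝ).continuous₂ hf.ofReal

end Fourier

lemma KD_zero (m : ℕ) : KD m 0 = ((∫ l, kdiff m l : ℝ) : ℂ) := by
  rw [KD_eq_fourier, fourier_ofReal_zero]

lemma norm_KD_le (m : ℕ) (t : ℝ) : ‖KD m t‖ ≤ ∫ l, kdiff m l := by
  rw [KD_eq_fourier]
  simpa only [abs_of_nonneg (kdiff_nonneg m)] using norm_fourier_ofReal_le (kdiff m) t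

lemma continuous_KD (m : ℕ) : Continuous (KD m) := by
  rw [KD_eq_fourier]; exact continuous_fourier_ofReal (integrable_kdiff m)

lemma enorm_le_eLpNormEssSup_of_continuous {X E : Type*} [TopologicalSpace X]
    [MeasurableSpace X] {μ : Measure X} [μ.IsOpenPosMeasure] [NormedAddCommGroup E] {f : X → E}
    (hf : Continuous f) (x : X) : ‖f x‖ₑ ≤ eLpNormEssSup f μ := by
  by_contra! hx
  have hopen : IsOpen {y | eLpNormEssSup f μ < ‖f y‖ₑ} := isOpen_lt continuous_const hf.enorm
  have hnull : μ {y | eLpNormEssSup f μ < ‖f y‖ₑ} = 0 := by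
    simpa only [not_le] using ae_iff.1 (enorm_ae_le_eLpNormEssSup f μ)
  exact hopen.measure_ne_zero μ ⟨x, hx⟩ hnull

lemma eLpNorm_top_eq_enorm_of_norm_le {X E : Type*} [TopologicalSpace X]
    [MeasurableSpace X] {μ : Measure X} [μ.IsOpenPosMeasure] [NormedAddCommGroup E] {f : X → E}
    (hf : Continuous f) {x₀ : X} (hmax : ∀ x, ‖f x‖ ≤ ‖f x₀‖) : eLpNorm f ⊤ μ = ‖f x₀‖ₑ := by
  rw [eLpNorm_exponent_top]
  refine le_antisymm ?_ (enorm_le_eLpNormEssSup_of_continuous hf x₀)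
  exact eLpNormEssSup_le_of_ae_enorm_bound (ae_of_all _ fun x => enorm_le_iff_norm_le.2 (hmax x))

section Kernel

variable {d : ℕ}

lemma Astar_zero (s : Fin d → ℕ) : Astar s 0 = ((∏ j, ∫ l, kdiff (s j) l : ℝ) : ℂ) := by
  simp only [Astar, PiLp.zero_apply, KD_zero, Complex.ofReal_prod]

lemma norm_Astar_le (s : Fin d → ℕ) (x : EuclideanSpace ℝ (Fin d)) :
    ‖Astar s x‖ ≤ ∏ j, ∫ l, kdiff (s j) l := by
  rw [Astar, norm_prod]
  exact Finset.prod_le_prod (fun _ _ => norm_nonneg _) fun j _ => norm_KD_le (s j) (x j)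

lemma continuous_Astar (s : Fin d → ℕ) : Continuous (Astar s) :=
  continuous_finsetProd _ fun j _ =>
    (continuous_KD (s j)).comp (EuclideanSpace.proj (𝕜 := ℝ) j).continuous

lemma eLpNorm_top_sum_Astar (T : Finset (Fin d → ℕ)) :
    eLpNorm (fun x => ∑ s ∈ T, Astar s x) ⊤ volume =
      ENNReal.ofReal (∑ s ∈ T, ∏ j, ∫ l, kdiff (s j) l) := by
  have hnonneg : 0 ≤ ∑ s ∈ T, ∏ j, ∫ l, kdiff (s j) l :=
    Finset.sum_nonneg fun s _ => Finset.prod_nonneg fun j _ =>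
      integral_nonneg fun _ => kdiff_nonneg (s j)
  have hzero : ∑ s ∈ T, Astar s 0 = ((∑ s ∈ T, ∏ j, ∫ l, kdiff (s j) l : ℝ) : ℂ) := by
    simp only [Astar_zero, Complex.ofReal_sum]
  have hnorm : ‖∑ s ∈ T, Astar s 0‖ = ∑ s ∈ T, ∏ j, ∫ l, kdiff (s j) l := by
    rw [hzero, Complex.norm_real, Real.norm_of_nonneg hnonneg]
  rw [eLpNorm_top_eq_enorm_of_norm_le (continuous_finsetSum _ fun s _ => continuous_Astar s)
    (x₀ := 0), ← ofReal_norm, hnorm]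
  intro x
  rw [hnorm]
  exact (norm_sum_le _ _).trans (Finset.sum_le_sum fun s _ => norm_Astar_le s x)

lemma prod_integral_kdiff_le (s : Fin d → ℕ) :
    ∏ j, ∫ l, kdiff (s j) l ≤ 2 ^ (∑ j, s j + d) := by
  calc ∏ j, ∫ l, kdiff (s j) l ≤ ∏ j, (2 : ℝ) ^ (s j + 1) :=
        Finset.prod_le_prod (fun j _ => integral_nonneg fun _ => kdiff_nonneg (s j))
          fun j _ => integral_kdiff_le (s j)
    _ = 2 ^ (∑ j, s j + d) := by simp [Finset.prod_pow_eq_pow_sum, Finset.sum_add_distrib]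

lemma le_prod_integral_kdiff (s : Fin d → ℕ) :
    2 ^ (∑ j, s j) / 16 ^ d ≤ ∏ j, ∫ l, kdiff (s j) l := by
  calc (2 : ℝ) ^ (∑ j, s j) / 16 ^ d = ∏ j, (2 : ℝ) ^ s j / 16 := by
        simp [Finset.prod_div_distrib, Finset.prod_pow_eq_pow_sum]
    _ ≤ ∏ j, ∫ l, kdiff (s j) l :=
        Finset.prod_le_prod (fun _ _ => by positivity) fun j _ => le_integral_kdiff (s j)

end Kernel

section Compositions

open Finset Nat

lemma card_antidiagonalTuple (k n : ℕ) : #(antidiagonalTuple k n) = (k + n - 1).choose n := by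
  have e : antidiagonalTuple k n ≃ Sym (Fin k) n :=
    (Equiv.subtypeEquivRight fun _ => mem_antidiagonalTuple).trans
      (Sym.equivNatSumOfFintype (Fin k) n).symm
  rw [card_eq_of_equiv_fintype e, Sym.card_sym_eq_choose, Fintype.card_fin]

lemma card_antidiagonalTuple_succ_le (k n : ℕ) : #(antidiagonalTuple (k + 1) n) ≤ (k + n) ^ k := by
  rw [card_antidiagonalTuple, Nat.add_right_comm, Nat.add_sub_cancel, ← choose_symm_add]
  exact choose_le_pow _ _

lemma pow_div_factorial_le_card_antidiagonalTuple_succ (k n : ℕ) :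
    ((n + 1 : ℕ) ^ k : ℝ) / k ! ≤ #(antidiagonalTuple (k + 1) n) := by
  rw [card_antidiagonalTuple, Nat.add_right_comm, Nat.add_sub_cancel, ← choose_symm_add]
  have h := pow_le_choose (α := ℝ) k (k + n)
  rwa [show k + n + 1 - k = n + 1 by omega] at h

lemma filter_piFinset_sum_eq (d N : ℕ) :
    (Fintype.piFinset fun _ : Fin d => range (N + 1)).filter (fun s => ∑ j, s j = N) =
      antidiagonalTuple d N := by
  ext s
  simp only [mem_filter, Fintype.mem_piFinset, Finset.mem_range, mem_antidiagonalTuple,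
    and_iff_right_iff_imp]
  intro hs j
  exact Nat.lt_succ_of_le (hs ▸ single_le_sum (fun _ _ => Nat.zero_le _) (mem_univ j))

lemma sum_prod_integral_kdiff_le (k n : ℕ) (hn : 1 ≤ n) :
    ∑ s ∈ antidiagonalTuple (k + 1) (n + 1), ∏ j, ∫ l, kdiff (s j) l ≤
      2 ^ (k + 2) * (k + 2) ^ k * 2 ^ n * n ^ k := by
  have hterm : ∀ s ∈ antidiagonalTuple (k + 1) (n + 1),
      ∏ j, ∫ l, kdiff (s j) l ≤ (2 : ℝ) ^ (n + 1 + (k + 1)) := fun s hs => by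
    simpa only [mem_antidiagonalTuple.1 hs] using prod_integral_kdiff_le s
  have hcard : (#(antidiagonalTuple (k + 1) (n + 1)) : ℝ) ≤ ((k + 2) * n) ^ k := by
    have hkn : (k + (n + 1) : ℝ) ≤ (k + 2) * n := by
      have : (1 : ℝ) ≤ n := by exact_mod_cast hn
      nlinarith
    calc (#(antidiagonalTuple (k + 1) (n + 1)) : ℝ) ≤ ((k + (n + 1) : ℕ) : ℝ) ^ k := by
          exact_mod_cast card_antidiagonalTuple_succ_le k (n + 1)
      _ ≤ ((k + 2) * n) ^ k := by push_cast; gcongr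
  calc _ ≤ #(antidiagonalTuple (k + 1) (n + 1)) • (2 : ℝ) ^ (n + 1 + (k + 1)) :=
        sum_le_card_nsmul _ _ _ hterm
    _ ≤ ((k + 2) * n) ^ k * (2 : ℝ) ^ (n + 1 + (k + 1)) := by
        rw [nsmul_eq_mul]; gcongr
    _ = 2 ^ (k + 2) * (k + 2) ^ k * 2 ^ n * n ^ k := by rw [mul_pow]; ring

lemma le_sum_prod_integral_kdiff (k n : ℕ) :
    2 / (16 ^ (k + 1) * k !) * 2 ^ n * n ^ k ≤
      ∑ s ∈ antidiagonalTuple (k + 1) (n + 1), ∏ j, ∫ l, kdiff (s j) l := by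
  have hterm : ∀ s ∈ antidiagonalTuple (k + 1) (n + 1),
      (2 : ℝ) ^ (n + 1) / 16 ^ (k + 1) ≤ ∏ j, ∫ l, kdiff (s j) l := fun s hs => by
    simpa only [mem_antidiagonalTuple.1 hs] using le_prod_integral_kdiff s
  have hcard : (n : ℝ) ^ k / k ! ≤ #(antidiagonalTuple (k + 1) (n + 1)) :=
    le_trans (by gcongr; linarith)
      (pow_div_factorial_le_card_antidiagonalTuple_succ k (n + 1))
  calc 2 / (16 ^ (k + 1) * k !) * 2 ^ n * n ^ k
        = (n : ℝ) ^ k / k ! * (2 ^ (n + 1) / 16 ^ (k + 1)) := by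
          field_simp
          ring
    _ ≤ #(antidiagonalTuple (k + 1) (n + 1)) * (2 ^ (n + 1) / 16 ^ (k + 1)) := by gcongr
    _ ≤ _ := by rw [← nsmul_eq_mul]; exact card_nsmul_le_sum _ _ _ hterm

end Compositions

/-- `‖Σ_{s₁+⋯+s_d = n+1} A*_s‖_{L∞(ℝ^d)} ≍ 2^n n^{d-1}`,
constants depending only on `d`. -/
theorem stmt5 (d : ℕ) (hd : 1 ≤ d) :
    ∃ c₁ c₂ : ℝ, 0 < c₁ ∧ 0 < c₂ ∧ ∀ n : ℕ, 1 ≤ n →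
      ENNReal.ofReal (c₁ * 2 ^ n * (n : ℝ) ^ (d - 1)) ≤
        eLpNorm (fun x : EuclideanSpace ℝ (Fin d) =>
          ∑ s ∈ (Fintype.piFinset fun _ : Fin d => Finset.range (n + 2)).filter
            (fun s => ∑ j, s j = n + 1), Astar s x) ⊤ volume ∧
      eLpNorm (fun x : EuclideanSpace ℝ (Fin d) =>
          ∑ s ∈ (Fintype.piFinset fun _ : Fin d => Finset.range (n + 2)).filter
            (fun s => ∑ j, s j = n + 1), Astar s x) ⊤ volume ≤
        ENNReal.ofReal (c₂ * 2 ^ n * (n : ℝ) ^ (d - 1)) := by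
  obtain ⟨k, rfl⟩ : ∃ k, d = k + 1 := ⟨d - 1, by omega⟩
  refine ⟨2 / (16 ^ (k + 1) * k.factorial), 2 ^ (k + 2) * (k + 2) ^ k, by positivity, by positivity,
    fun n hn => ?_⟩
  rw [filter_piFinset_sum_eq (k + 1) (n + 1), eLpNorm_top_sum_Astar, Nat.add_sub_cancel]
  exact ⟨ENNReal.ofReal_le_ofReal (le_sum_prod_integral_kdiff k n),
    ENNReal.ofReal_le_ofReal (sum_prod_integral_kdiff_le k n hn)⟩
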